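/- With the tensor product OPB construction A ⊗ A': if A ⊗ A' is reducible, then A is reducible or A' is reducible. -/

import Mathlib

/-- Concrete tensor product of two vectors in Euclidean spaces. -/
noncomputable def tensor2 {ι κ : Type*} [Fintype ι] [Fintype κ]
    (a : EuclideanSpace ℂ ι) (b : EuclideanSpace ℂ κ) :
    EuclideanSpace ℂ (ι × κ) :=
  WithLp.toLp 2 (fun p => a p.1 * b p.2)

/-- Concrete tensor product of an `n`-tuple of vectors in Euclidean spaces. -/
noncomputable def tensorFam {n : ℕ} {ι : Fin n → Type*} [∀ k, Fintype (ι k)]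
    (a : ∀ k, EuclideanSpace ℂ (ι k)) : EuclideanSpace ℂ (∀ k, ι k) :=
  WithLp.toLp 2 (fun f => ∏ k, a k (f k))

/-!
If the `k`-th factors of `A ⊗ A'` split along `(S, Sᶜ)`, look at the rows `{i} × Fin D'`.
If some row meets both `S` and `Sᶜ`, that row splits the factors `b j k`, since `a i k` is not
orthogonal to itself. Otherwise every row lies in `S` or in `Sᶜ`, and any column splits the
factors `a i k` for the same reason.
-/

lemma inner_tensor2 {ι κ : Type*} [Fintype ι] [Fintype κ]
    (x x' : EuclideanSpace ℂ ι) (y y' : EuclideanSpace ℂ κ) :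
    (inner ℂ (tensor2 x y) (tensor2 x' y') : ℂ) = inner ℂ x x' * inner ℂ y y' := by
  simp only [tensor2, PiLp.inner_apply, RCLike.inner_apply, map_mul]
  rw [Fintype.sum_prod_type, Finset.sum_mul_sum]
  exact Finset.sum_congr rfl fun i _ => Finset.sum_congr rfl fun j _ => by ring

lemma inner_self_ne_zero_of_norm_eq_one {𝕜 E : Type*} [RCLike 𝕜] [NormedAddCommGroup E]
    [InnerProductSpace 𝕜 E] {x : E} (hx : ‖x‖ = 1) : inner 𝕜 x x ≠ 0 :=
  inner_self_ne_zero.mpr (norm_ne_zero_iff.mp (hx ▸ one_ne_zero))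

/-- With `R` the orthogonality of `k`-th factors, `(J, Jᶜ)` witnesses reducibility at `k`. -/
def IsSplitting {α : Type*} (R : α → α → Prop) (J : Set α) : Prop :=
  J.Nonempty ∧ Jᶜ.Nonempty ∧ ∀ i ∈ J, ∀ i' ∈ Jᶜ, R i i'

namespace IsSplitting

variable {α β : Type*}

lemma mono {R R' : α → α → Prop} {J : Set α} (h : IsSplitting R J)
    (hRR' : ∀ i i', R i i' → R' i i') : IsSplitting R' J :=
  ⟨h.1, h.2.1, fun i hi i' hi' => hRR' i i' (h.2.2 i hi i' hi')⟩

lemma exists_of_prod {R : α → α → Prop} {R' : β → β → Prop} (hR : ∀ i, ¬R i i)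
    (hR' : ∀ j, ¬R' j j) {S : Set (α × β)}
    (hS : IsSplitting (fun p q => R p.1 q.1 ∨ R' p.2 q.2) S) :
    (∃ J, IsSplitting R J) ∨ ∃ J, IsSplitting R' J := by
  obtain ⟨⟨p₀, hp₀⟩, ⟨q₀, hq₀⟩, hsep⟩ := hS
  by_cases hrow : ∃ i j j', (i, j) ∈ S ∧ (i, j') ∉ S
  · obtain ⟨i, j, j', hj, hj'⟩ := hrow
    refine Or.inr ⟨{j | (i, j) ∈ S}, ⟨j, hj⟩, ⟨j', hj'⟩, fun j hj j' hj' => ?_⟩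
    exact (hsep (i, j) hj (i, j') hj').resolve_left (hR i)
  · push Not at hrow
    refine Or.inl ⟨{i | (i, p₀.2) ∈ S}, ⟨p₀.1, hp₀⟩, ⟨q₀.1, fun h => hq₀ (hrow _ _ _ h)⟩,
      fun i hi i' hi' => ?_⟩
    exact (hsep (i, p₀.2) hi (i', p₀.2) hi').resolve_right (hR' p₀.2)

end IsSplitting

theorem stmt13_general (n D D' : ℕ) (d d' : Fin n → ℕ)
    (a : Fin D → ∀ k, EuclideanSpace ℂ (Fin (d k)))
    (b : Fin D' → ∀ k, EuclideanSpace ℂ (Fin (d' k)))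
    (ha : ∀ i k, ‖a i k‖ = 1) (hb : ∀ j k, ‖b j k‖ = 1)
    (hred : ∃ k : Fin n, ∃ S : Set (Fin D × Fin D'), S.Nonempty ∧ Sᶜ.Nonempty ∧
      ∀ p ∈ S, ∀ q ∈ Sᶜ,
        (inner ℂ (tensor2 (a p.1 k) (b p.2 k)) (tensor2 (a q.1 k) (b q.2 k)) : ℂ) = 0) :
    (∃ k : Fin n, ∃ J : Set (Fin D), J.Nonempty ∧ Jᶜ.Nonempty ∧
        ∀ i ∈ J, ∀ i' ∈ Jᶜ, (inner ℂ (a i k) (a i' k) : ℂ) = 0) ∨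
    (∃ k : Fin n, ∃ J : Set (Fin D'), J.Nonempty ∧ Jᶜ.Nonempty ∧
        ∀ j ∈ J, ∀ j' ∈ Jᶜ, (inner ℂ (b j k) (b j' k) : ℂ) = 0) := by
  obtain ⟨k, S, hS⟩ := hred
  have hS' : IsSplitting (fun p q : Fin D × Fin D' => (inner ℂ (a p.1 k) (a q.1 k) : ℂ) = 0 ∨
      (inner ℂ (b p.2 k) (b q.2 k) : ℂ) = 0) S :=
    IsSplitting.mono hS fun p q h => by rwa [inner_tensor2, mul_eq_zero] at h
  rcases hS'.exists_of_prod (R := fun i i' => (inner ℂ (a i k) (a i' k) : ℂ) = 0)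
    (R' := fun j j' => (inner ℂ (b j k) (b j' k) : ℂ) = 0) (fun i => inner_self_ne_zero_of_norm_eq_one (ha i k))
    (fun j => inner_self_ne_zero_of_norm_eq_one (hb j k)) with ⟨J, hJ⟩ | ⟨J, hJ⟩
  exacts [Or.inl ⟨k, J, hJ⟩, Or.inr ⟨k, J, hJ⟩]

/-- If the tensor product OPB `A ⊗ A'` (indexed by pairs `(i,j)`, with `k`-th factor
`a_{i,k} ⊗ b_{j,k}`) is reducible, then `A` is reducible or `A'` is reducible. -/
theorem stmt13 (n D D' : ℕ) (d d' : Fin n → ℕ)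
    (a : Fin D → ∀ k, EuclideanSpace ℂ (Fin (d k)))
    (b : Fin D' → ∀ k, EuclideanSpace ℂ (Fin (d' k)))
    (ha : ∀ i k, ‖a i k‖ = 1) (hb : ∀ j k, ‖b j k‖ = 1)
    (haonb : Orthonormal ℂ (fun i => tensorFam (a i)))
    (haspan : Submodule.span ℂ (Set.range fun i => tensorFam (a i)) = ⊤)
    (hbonb : Orthonormal ℂ (fun j => tensorFam (b j)))
    (hbspan : Submodule.span ℂ (Set.range fun j => tensorFam (b j)) = ⊤)
    (hred : ∃ k : Fin n, ∃ S : Set (Fin D × Fin D'), S.Nonempty ∧ Sᶜ.Nonempty ∧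
      ∀ p ∈ S, ∀ q ∈ Sᶜ,
        (inner ℂ (tensor2 (a p.1 k) (b p.2 k)) (tensor2 (a q.1 k) (b q.2 k)) : ℂ) = 0) :
    (∃ k : Fin n, ∃ J : Set (Fin D), J.Nonempty ∧ Jᶜ.Nonempty ∧
        ∀ i ∈ J, ∀ i' ∈ Jᶜ, (inner ℂ (a i k) (a i' k) : ℂ) = 0) ∨
    (∃ k : Fin n, ∃ J : Set (Fin D'), J.Nonempty ∧ Jᶜ.Nonempty ∧
        ∀ j ∈ J, ∀ j' ∈ Jᶜ, (inner ℂ (b j k) (b j' k) : ℂ) = 0) :=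
  stmt13_general n D D' d d' a b ha hb hred
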